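/- arXiv:2405.09437 — 4 statements merged into one kernel-verified Lean document; each statement's English description precedes it below -/
import Mathlib

section
/- If X is a locally compact Hausdorff second-countable space and Y is a second-countable space, then the space of continuous functions with open domain from X to Y, equipped with the compact-open topology (subbasic sets ⟨K,V⟩ = {f : K ⊆ dom f and f(K) ⊆ V} for K compact and V open), is second countable. -/
/-
A countable subbasis is given by the sets ⟨cl U, W⟩ with `U`, `W` taken from countable bases of
`X` and `Y` and `cl U` compact. Writing `f⁻¹(V)` for the (open) set of points of `dom f` sent into
`V`, one has `f ∈ ⟨K, V⟩ ↔ K ⊆ f⁻¹(V)`. Given `f ∈ ⟨K, V⟩`, every `x ∈ K` has a basic neighbourhood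
`W ⊆ V` of `f x` and, by local compactness and regularity, a basic `U ∋ x` with `cl U` compact and
`cl U ⊆ f⁻¹(W)`; finitely many such `U` cover `K`, and the intersection of the corresponding
`⟨cl U, W⟩` is a neighbourhood of `f` inside `⟨K, V⟩`.
-/

open Set Topology Filter

/-- A continuous partial function from `X` to `Y` with open domain. -/
structure Cod (X Y : Type*) [TopologicalSpace X] [TopologicalSpace Y] where
  dom : Set X
  toFun : dom → Y
  isOpen_dom : IsOpen dom
  continuous_toFun : Continuous toFun

namespace Cod

variable {X Y : Type*} [TopologicalSpace X] [TopologicalSpace Y]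

/-- The image of a subset of `X` under a partial function. -/
def image (f : Cod X Y) (K : Set X) : Set Y := f.toFun '' ((↑) ⁻¹' K)

/-- The empty partial function. -/
def empty (X Y : Type*) [TopologicalSpace X] [TopologicalSpace Y] : Cod X Y where
  dom := ∅
  toFun := fun x => absurd x.2 (Set.notMem_empty _)
  isOpen_dom := isOpen_empty
  continuous_toFun := by
    rw [continuous_iff_continuousAt]
    rintro ⟨x, hx⟩
    exact absurd hx (Set.notMem_empty x)

end Cod

/-- The compact-open topology on `Cod X Y`, generated by the sets `⟨K,V⟩`. -/
def codCO (X Y : Type*) [TopologicalSpace X] [TopologicalSpace Y] : TopologicalSpace (Cod X Y) :=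
  TopologicalSpace.generateFrom
    {S | ∃ (K : Set X) (V : Set Y), IsCompact K ∧ IsOpen V ∧
      S = {f : Cod X Y | K ⊆ f.dom ∧ f.image K ⊆ V}}

open TopologicalSpace

lemma TopologicalSpace.IsTopologicalBasis.exists_mem_isCompact_closure_subset {X : Type*}
    [TopologicalSpace X] [LocallyCompactSpace X] [RegularSpace X] {B : Set (Set X)}
    (hB : IsTopologicalBasis B) {x : X} {O : Set X} (hO : IsOpen O) (hx : x ∈ O) :
    ∃ U ∈ B, x ∈ U ∧ IsCompact (closure U) ∧ closure U ⊆ O := by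
  obtain ⟨V, hV, hxV, hVO, hVc⟩ :=
    exists_open_between_and_isCompact_closure isCompact_singleton hO (singleton_subset_iff.2 hx)
  obtain ⟨U, hUB, hxU, hUV⟩ := hB.exists_subset_of_mem_open (singleton_subset_iff.1 hxV) hV
  have hUV' : closure U ⊆ closure V := closure_mono hUV
  exact ⟨U, hUB, hxU, hVc.of_isClosed_subset isClosed_closure hUV', hUV'.trans hVO⟩

namespace Cod

variable {X Y : Type*} [TopologicalSpace X] [TopologicalSpace Y]

def box (K : Set X) (V : Set Y) : Set (Cod X Y) :=
  {f | K ⊆ f.dom ∧ f.image K ⊆ V}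

def preimage (f : Cod X Y) (V : Set Y) : Set X :=
  (↑) '' (f.toFun ⁻¹' V)

lemma preimage_mono (f : Cod X Y) {V W : Set Y} (h : V ⊆ W) : f.preimage V ⊆ f.preimage W :=
  image_mono (Set.preimage_mono h)

lemma isOpen_preimage (f : Cod X Y) {V : Set Y} (hV : IsOpen V) : IsOpen (f.preimage V) :=
  f.isOpen_dom.isOpenMap_subtype_val _ (hV.preimage f.continuous_toFun)

lemma mem_box_iff {f : Cod X Y} {K : Set X} {V : Set Y} : f ∈ box K V ↔ K ⊆ f.preimage V := by
  constructor
  · rintro ⟨hK, hKV⟩ x hx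
    exact ⟨⟨x, hK hx⟩, hKV ⟨_, hx, rfl⟩, rfl⟩
  · intro hK
    refine ⟨hK.trans (image_subset_range _ _ |>.trans Subtype.range_coe.subset), ?_⟩
    rintro _ ⟨z, hz, rfl⟩
    obtain ⟨z', hz'V, hz'⟩ := hK hz
    rwa [← Subtype.coe_injective hz']

lemma biInter_box_subset_box {ι : Type*} {s : Set ι} {L : ι → Set X} {W : ι → Set Y}
    {K : Set X} {V : Set Y} (hKL : K ⊆ ⋃ i ∈ s, L i) (hWV : ∀ i ∈ s, W i ⊆ V) :
    ⋂ i ∈ s, box (L i) (W i) ⊆ box K V := by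
  intro f hf
  rw [mem_iInter₂] at hf
  refine mem_box_iff.2 (hKL.trans (iUnion₂_subset fun i hi => ?_))
  exact (mem_box_iff.1 (hf i hi)).trans (f.preimage_mono (hWV i hi))

def basicBoxes (BX : Set (Set X)) (BY : Set (Set Y)) : Set (Set (Cod X Y)) :=
  (fun p : Set X × Set Y => box (closure p.1) p.2) '' {p | p.1 ∈ BX ∧ p.2 ∈ BY ∧
    IsCompact (closure p.1)}

lemma countable_basicBoxes {BX : Set (Set X)} {BY : Set (Set Y)} (hBX : BX.Countable)
    (hBY : BY.Countable) : (basicBoxes BX BY : Set (Set (Cod X Y))).Countable :=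
  ((hBX.prod hBY).mono fun _ hp => mem_prod.2 ⟨hp.1, hp.2.1⟩).image _

variable [LocallyCompactSpace X] [RegularSpace X] {BX : Set (Set X)} {BY : Set (Set Y)}

lemma exists_basicBox_mem_subset (hBX : IsTopologicalBasis BX) (hBY : IsTopologicalBasis BY)
    {f : Cod X Y} {V : Set Y} (hV : IsOpen V) {x : X} (hx : x ∈ f.preimage V) :
    ∃ U ∈ BX, ∃ W ∈ BY, x ∈ U ∧ IsCompact (closure U) ∧ f ∈ box (closure U) W ∧ W ⊆ V := by
  obtain ⟨z, hzV, rfl⟩ := hx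
  obtain ⟨W, hWB, hzW, hWV⟩ := hBY.exists_subset_of_mem_open hzV hV
  obtain ⟨U, hUB, hxU, hUc, hUW⟩ := hBX.exists_mem_isCompact_closure_subset
    (f.isOpen_preimage (hBY.isOpen hWB)) ⟨z, hzW, rfl⟩
  exact ⟨U, hUB, W, hWB, hxU, hUc, mem_box_iff.2 hUW, hWV⟩

lemma isOpen_box_generateFrom_basicBoxes (hBX : IsTopologicalBasis BX)
    (hBY : IsTopologicalBasis BY) {K : Set X} {V : Set Y} (hK : IsCompact K) (hV : IsOpen V) :
    IsOpen[generateFrom (basicBoxes BX BY)] (box K V) := by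
  let _ := generateFrom (basicBoxes BX BY)
  refine isOpen_iff_forall_mem_open.2 fun f hf => ?_
  choose! U hUB W hWB hxU hUc hfUW hWV using
    fun x (hx : x ∈ K) => exists_basicBox_mem_subset hBX hBY hV (mem_box_iff.1 hf hx)
  obtain ⟨s, hsK, hKs⟩ := hK.elim_nhds_subcover U fun x hx =>
    (hBX.isOpen (hUB x hx)).mem_nhds (hxU x hx)
  refine ⟨⋂ x ∈ s, box (closure (U x)) (W x), ?_, ?_, ?_⟩
  · exact biInter_box_subset_box (hKs.trans (biUnion_mono subset_rfl fun _ _ => subset_closure))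
      fun x hx => hWV x (hsK x hx)
  · exact isOpen_biInter_finset fun x hx => isOpen_generateFrom_of_mem
      ⟨(U x, W x), ⟨hUB x (hsK x hx), hWB x (hsK x hx), hUc x (hsK x hx)⟩, rfl⟩
  · exact mem_iInter₂.2 fun x hx => hfUW x (hsK x hx)

theorem codCO_eq_generateFrom_basicBoxes (hBX : IsTopologicalBasis BX)
    (hBY : IsTopologicalBasis BY) : codCO X Y = generateFrom (basicBoxes BX BY) := by
  refine le_antisymm (generateFrom_anti ?_) (le_generateFrom ?_)
  · rintro _ ⟨⟨U, W⟩, ⟨-, hWB, hUc⟩, rfl⟩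
    exact ⟨closure U, W, hUc, hBY.isOpen hWB, rfl⟩
  · rintro _ ⟨K, V, hK, hV, rfl⟩
    exact isOpen_box_generateFrom_basicBoxes hBX hBY hK hV

end Cod

/-- If `X` is locally compact Hausdorff second-countable and `Y` is second-countable, then
`C_od(X,Y)` with the compact-open topology is second countable. -/
theorem stmt1 (X Y : Type*) [TopologicalSpace X] [LocallyCompactSpace X] [T2Space X]
    [SecondCountableTopology X] [TopologicalSpace Y] [SecondCountableTopology Y] :
    @SecondCountableTopology (Cod X Y) (codCO X Y) := by
  rw [Cod.codCO_eq_generateFrom_basicBoxes (isBasis_countableBasis X) (isBasis_countableBasis Y)]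
  exact SecondCountableTopology.mk'
    (Cod.countable_basicBoxes (countable_countableBasis X) (countable_countableBasis Y))
end

section
/- If X is a locally compact Hausdorff second-countable space, then the Fell topology on CL(X), the hyperspace of closed subsets of X including the empty set, is compact and metrizable, hence second countable. -/
open Set Topology Filter

/-- The hyperspace of closed subsets of `X`, including the empty set. -/
def CL (X : Type*) [TopologicalSpace X] := {A : Set X // IsClosed A}

/-- The Fell topology on `CL X`. -/
def fellTop (X : Type*) [TopologicalSpace X] : TopologicalSpace (CL X) :=
  TopologicalSpace.generateFrom
    ({S | ∃ K : Set X, IsCompact K ∧ S = {A : CL X | A.1 ⊆ Kᶜ}} ∪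
     {S | ∃ V : Set X, IsOpen V ∧ V.Nonempty ∧ S = {A : CL X | (A.1 ∩ V).Nonempty}})

/-!
Compactness holds over any space: for an ultrafilter `𝓕` on `CL X`, the set of points `x` such
that `U⁻ ∈ 𝓕` for every open `U ∋ x` is closed, and `𝓕` converges to it, since a compact set
missed by it is covered by finitely many opens `U` with `U⁻ ∉ 𝓕`.
Local compactness makes the Fell topology Hausdorff: a compact neighbourhood `K` of a point of
`A ∖ B` missing `B` gives the disjoint neighbourhoods `(int K)⁻ ∋ A` and `(X ∖ K)⁺ ∋ B`.
With second countability of `X` it also lets one replace all compact sets by a countable family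
and all open sets by a countable basis, so the Fell topology is second countable. Being compact
Hausdorff it is regular, hence metrizable by Urysohn's theorem.
-/

open TopologicalSpace

section CountableFamilies

variable {X : Type*} [TopologicalSpace X]

/-- Finite unions of members of a countable basis. -/
lemma exists_countable_subset_between [SecondCountableTopology X] :
    ∃ 𝒰 : Set (Set X), 𝒰.Countable ∧
      ∀ K W, IsCompact K → IsOpen W → K ⊆ W → ∃ U ∈ 𝒰, K ⊆ U ∧ U ⊆ W := by
  obtain ⟨b, hbc, -, hb⟩ := exists_countable_basis X
  refine ⟨sUnion '' {s | s.Finite ∧ s ⊆ b},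
    (countable_ofPred_finite_subset hbc).image _, fun K W hK hW hKW => ?_⟩
  have hcover : K ⊆ ⋃ U ∈ {U ∈ b | U ⊆ W}, id U := fun x hx => by
    obtain ⟨U, hUb, hxU, hUW⟩ := hb.exists_subset_of_mem_open (hKW hx) hW
    exact mem_biUnion ⟨hUb, hUW⟩ hxU
  obtain ⟨s, hsb, hsf, hKs⟩ :=
    hK.elim_finite_subcover_image (fun U hU => hb.isOpen hU.1) hcover
  refine ⟨⋃₀ s, ⟨s, ⟨hsf, fun U hU => (hsb hU).1⟩, rfl⟩, ?_,
    sUnion_subset fun U hU => (hsb hU).2⟩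
  rwa [sUnion_eq_biUnion]

/-- The compact sets are chosen between pairs of members of `exists_countable_subset_between`. -/
lemma exists_countable_isCompact_between [LocallyCompactSpace X] [SecondCountableTopology X] :
    ∃ 𝒞 : Set (Set X), 𝒞.Countable ∧ (∀ C ∈ 𝒞, IsCompact C) ∧
      ∀ K W, IsCompact K → IsOpen W → K ⊆ W → ∃ C ∈ 𝒞, K ⊆ C ∧ C ⊆ W := by
  classical
  obtain ⟨𝒰, h𝒰c, h𝒰⟩ := exists_countable_subset_between (X := X)
  let between : Set X × Set X → Prop := fun p => ∃ L, IsCompact L ∧ p.1 ⊆ L ∧ L ⊆ p.2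
  let compactBetween : Set X × Set X → Set X := fun p =>
    if h : between p then h.choose else ∅
  have compactBetween_spec : ∀ p, between p →
      IsCompact (compactBetween p) ∧ p.1 ⊆ compactBetween p ∧ compactBetween p ⊆ p.2 :=
    fun p h => by simpa only [compactBetween, dif_pos h] using h.choose_spec
  refine ⟨compactBetween '' (𝒰 ×ˢ 𝒰), (h𝒰c.prod h𝒰c).image _, ?_, ?_⟩
  · rintro _ ⟨p, -, rfl⟩
    by_cases h : between p
    · exact (compactBetween_spec p h).1
    · simp only [compactBetween, dif_neg h, isCompact_empty]
  · intro K W hK hW hKW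
    obtain ⟨L, hL, hKL, hLW⟩ := exists_compact_between hK hW hKW
    obtain ⟨U, hU, hKU, hUL⟩ := h𝒰 K (interior L) hK isOpen_interior hKL
    obtain ⟨V, hV, hLV, hVW⟩ := h𝒰 L W hL hW hLW
    obtain ⟨-, hUC, hCV⟩ :=
      compactBetween_spec (U, V) ⟨L, hL, hUL.trans interior_subset, hLV⟩
    exact ⟨_, mem_image_of_mem _ ⟨hU, hV⟩, hKU.trans hUC, hCV.trans hVW⟩

end CountableFamilies

namespace CL

variable {X : Type*} [TopologicalSpace X]

/-- The subbasic set `(X ∖ K)⁺`. -/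
def miss (K : Set X) : Set (CL X) := {A | A.1 ⊆ Kᶜ}

/-- The subbasic set `V⁻`. -/
def hit (V : Set X) : Set (CL X) := {A | (A.1 ∩ V).Nonempty}

lemma miss_anti {K L : Set X} (h : K ⊆ L) : miss L ⊆ miss K :=
  fun _ hA => hA.trans (compl_subset_compl.2 h)

lemma hit_sUnion (S : Set (Set X)) : hit (⋃₀ S) = ⋃ V ∈ S, hit V := by
  ext A
  simp only [hit, sUnion_eq_biUnion, inter_iUnion₂, nonempty_iUnion, mem_ofPred_eq, mem_iUnion,
    exists_prop]

lemma disjoint_hit_interior_miss (K : Set X) : Disjoint (hit (interior K)) (miss K) :=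
  disjoint_left.2 fun _ ⟨_, hxA, hxK⟩ hA => hA hxA (interior_subset hxK)

/-- The lower Kuratowski limit of `𝓕`. -/
def lowerLimit (𝓕 : Filter (CL X)) : Set X := {x | ∀ U, IsOpen U → x ∈ U → hit U ∈ 𝓕}

lemma isClosed_lowerLimit (𝓕 : Filter (CL X)) : IsClosed (lowerLimit 𝓕) := by
  refine isOpen_compl_iff.1 (isOpen_iff_forall_mem_open.2 fun x hx => ?_)
  simp only [lowerLimit, mem_compl_iff, mem_ofPred_eq, not_forall] at hx
  obtain ⟨U, hU, hxU, hUF⟩ := hx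
  exact ⟨U, fun y hyU hy => hUF (hy U hU hyU), hU, hxU⟩

local instance : TopologicalSpace (CL X) := fellTop X

lemma isOpen_miss {K : Set X} (hK : IsCompact K) : IsOpen (miss K) :=
  isOpen_generateFrom_of_mem (Or.inl ⟨K, hK, rfl⟩)

lemma isOpen_hit {V : Set X} (hV : IsOpen V) : IsOpen (hit V) := by
  rcases V.eq_empty_or_nonempty with rfl | hne
  · simpa only [hit, inter_empty, Set.not_nonempty_empty, ofPred_false] using isOpen_empty
  · exact isOpen_generateFrom_of_mem (Or.inr ⟨V, hV, hne, rfl⟩)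

lemma ultrafilter_le_nhds_lowerLimit (𝓕 : Ultrafilter (CL X)) :
    (𝓕 : Filter (CL X)) ≤ 𝓝 ⟨lowerLimit ↑𝓕, isClosed_lowerLimit _⟩ := by
  refine (tendsto_nhds_generateFrom_iff (m := id)).2 ?_
  rintro _ (⟨K, hK, rfl⟩ | ⟨V, hV, -, rfl⟩) hlim
  · have hcover : K ⊆ ⋃ U ∈ {U | IsOpen U ∧ hit U ∉ 𝓕}, id U := fun x hxK => by
      have hx : x ∉ lowerLimit ↑𝓕 := fun hx => hlim hx hxK
      simp only [lowerLimit, mem_ofPred_eq, not_forall] at hx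
      obtain ⟨U, hU, hxU, hUF⟩ := hx
      exact mem_biUnion ⟨hU, hUF⟩ hxU
    obtain ⟨T, hT, hTf, hKT⟩ := hK.elim_finite_subcover_image (fun U hU => hU.1) hcover
    have hmissed : (⋂ U ∈ T, (hit U)ᶜ) ∈ 𝓕 :=
      (biInter_mem hTf).2 fun U hU => Ultrafilter.compl_mem_iff_notMem.2 (hT hU).2
    refine mem_of_superset hmissed fun B hB y hyB hyK => ?_
    obtain ⟨U, hUT, hyU⟩ := mem_iUnion₂.1 (hKT hyK)
    exact mem_iInter₂.1 hB U hUT ⟨y, hyB, hyU⟩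
  · obtain ⟨x, hx, hxV⟩ := hlim
    exact hx V hV hxV

lemma compactSpace : CompactSpace (CL X) :=
  isCompact_univ_iff.1 <| isCompact_iff_ultrafilter_le_nhds.2 fun 𝓕 _ =>
    ⟨_, mem_univ _, ultrafilter_le_nhds_lowerLimit 𝓕⟩

lemma t2Space [LocallyCompactSpace X] : T2Space (CL X) := by
  refine ⟨fun A B hAB => ?_⟩
  wlog hAB' : ¬A.1 ⊆ B.1 generalizing A B
  · have hBA : ¬B.1 ⊆ A.1 := fun hBA => hAB (Subtype.ext (Subset.antisymm (not_not.1 hAB') hBA))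
    obtain ⟨u, v, hu, hv, hBu, hAv, huv⟩ := this B A hAB.symm hBA
    exact ⟨v, u, hv, hu, hAv, hBu, huv.symm⟩
  obtain ⟨x, hxA, hxB⟩ := not_subset.1 hAB'
  obtain ⟨K, hK, hxK, hKB⟩ := exists_compact_subset B.2.isOpen_compl hxB
  exact ⟨_, _, isOpen_hit isOpen_interior, isOpen_miss hK, ⟨x, hxA, hxK⟩,
    fun y hyB hyK => hKB hyK hyB, disjoint_hit_interior_miss K⟩

lemma miss_eq_biUnion {𝒞 : Set (Set X)}
    (h𝒞 : ∀ K W, IsCompact K → IsOpen W → K ⊆ W → ∃ C ∈ 𝒞, K ⊆ C ∧ C ⊆ W)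
    {K : Set X} (hK : IsCompact K) : miss K = ⋃ C ∈ {C ∈ 𝒞 | K ⊆ C}, miss C := by
  refine Subset.antisymm (fun A hA => ?_) (iUnion₂_subset fun C hC => miss_anti hC.2)
  obtain ⟨C, hC, hKC, hCA⟩ := h𝒞 K A.1ᶜ hK A.2.isOpen_compl (subset_compl_comm.1 hA)
  exact mem_biUnion ⟨hC, hKC⟩ (subset_compl_comm.1 hCA)

lemma fellTop_eq_generateFrom {𝒞 b : Set (Set X)} (h𝒞K : ∀ C ∈ 𝒞, IsCompact C)
    (h𝒞 : ∀ K W, IsCompact K → IsOpen W → K ⊆ W → ∃ C ∈ 𝒞, K ⊆ C ∧ C ⊆ W)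
    (hb : IsTopologicalBasis b) :
    fellTop X = generateFrom (miss '' 𝒞 ∪ hit '' b) := by
  refine le_antisymm (le_generateFrom ?_) (le_generateFrom ?_)
  · rintro _ (⟨C, hC, rfl⟩ | ⟨U, hU, rfl⟩)
    exacts [isOpen_miss (h𝒞K C hC), isOpen_hit (hb.isOpen hU)]
  · let := generateFrom (miss '' 𝒞 ∪ hit '' b)
    rintro _ (⟨K, hK, rfl⟩ | ⟨V, hV, -, rfl⟩)
    · change IsOpen (miss K)
      rw [miss_eq_biUnion h𝒞 hK]
      exact isOpen_biUnion fun C hC => isOpen_generateFrom_of_mem (Or.inl ⟨C, hC.1, rfl⟩)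
    · change IsOpen (hit V)
      rw [hb.open_eq_sUnion' hV, hit_sUnion]
      exact isOpen_biUnion fun U hU => isOpen_generateFrom_of_mem (Or.inr ⟨U, hU.1, rfl⟩)

lemma secondCountableTopology [LocallyCompactSpace X] [SecondCountableTopology X] :
    SecondCountableTopology (CL X) := by
  obtain ⟨𝒞, h𝒞c, h𝒞K, h𝒞⟩ := exists_countable_isCompact_between (X := X)
  obtain ⟨b, hbc, -, hb⟩ := exists_countable_basis X
  exact ⟨⟨_, (h𝒞c.image _).union (hbc.image _), fellTop_eq_generateFrom h𝒞K h𝒞 hb⟩⟩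

end CL

theorem stmt4_general (X : Type*) [TopologicalSpace X] [LocallyCompactSpace X]
    [SecondCountableTopology X] :
    @CompactSpace (CL X) (fellTop X) ∧ @TopologicalSpace.MetrizableSpace (CL X) (fellTop X) ∧
      @SecondCountableTopology (CL X) (fellTop X) := by
  let := fellTop X
  have := CL.compactSpace (X := X)
  have := CL.t2Space (X := X)
  have := CL.secondCountableTopology (X := X)
  exact ⟨‹_›, inferInstance, ‹_›⟩

/-- If `X` is locally compact Hausdorff second-countable, then the Fell topology on `CL(X)`
is compact and metrizable, hence second countable. -/
theorem stmt4 (X : Type*) [TopologicalSpace X] [LocallyCompactSpace X] [T2Space X]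
    [SecondCountableTopology X] :
    @CompactSpace (CL X) (fellTop X) ∧ @TopologicalSpace.MetrizableSpace (CL X) (fellTop X) ∧
      @SecondCountableTopology (CL X) (fellTop X) :=
  stmt4_general X
end

section
/- Let X be a topological space and (Y,d) a metric space. The family 𝓑 consisting of the full space C_od(X,Y) together with all sets B_K(f,ε) = {g : K ⊆ dom(g), and sup_{x∈K} d(f(x),g(x)) < ε}, for f a nonempty continuous partial function with open domain, K a nonempty compact subset of dom(f), and ε > 0, is a basis for a topology on C_od(X,Y). -/
open Set Topology Filter

/-- `dK f g K = sup_{x ∈ K} d (f x) (g x)` (meaningful when `K ⊆ dom f ∩ dom g`). -/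
noncomputable def dK {X Y : Type*} [TopologicalSpace X] [MetricSpace Y]
    (f g : Cod X Y) (K : Set X) : ℝ :=
  sSup {r | ∃ (x : X) (hf : x ∈ f.dom) (hg : x ∈ g.dom), x ∈ K ∧
    r = dist (f.toFun ⟨x, hf⟩) (g.toFun ⟨x, hg⟩)}

/-- The basic set `B_K(f,ε)` of the topology of compact convergence. -/
def cball {X Y : Type*} [TopologicalSpace X] [MetricSpace Y]
    (f : Cod X Y) (K : Set X) (ε : ℝ) : Set (Cod X Y) :=
  {g | K ⊆ g.dom ∧ dK f g K < ε}

/-- The topology of compact convergence on `Cod X Y`. -/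
def tauCC (X Y : Type*) [TopologicalSpace X] [MetricSpace Y] : TopologicalSpace (Cod X Y) :=
  TopologicalSpace.generateFrom
    (insert Set.univ
      {S | ∃ (f : Cod X Y) (K : Set X) (ε : ℝ), K.Nonempty ∧ IsCompact K ∧ K ⊆ f.dom ∧
        0 < ε ∧ S = cball f K ε})

/-! Around a point `g` of `B_{K₁}(f₁,ε₁) ∩ B_{K₂}(f₂,ε₂)` sits the basic set
`B_{K₁ ∪ K₂}(g, δ)` with `δ = min (εᵢ - d_{Kᵢ}(fᵢ,g))`, by the triangle inequality for the
sup-distances, which are finite because `f` and `g` map compact sets to compact sets.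
The whole space has to be added to the family since a partial function with empty domain
lies in no `B_K(f,ε)` with `K` nonempty. -/

namespace Cod

variable {X Y : Type*} [TopologicalSpace X] [TopologicalSpace Y]

lemma isCompact_image (f : Cod X Y) {K : Set X} (hK : IsCompact K) (hKf : K ⊆ f.dom) :
    IsCompact (f.image K) := by
  have hK' : IsCompact ((↑) ⁻¹' K : Set f.dom) := by
    rwa [Subtype.isCompact_iff, Subtype.image_preimage_coe, inter_eq_right.mpr hKf]
  exact hK'.image f.continuous_toFun

end Cod

section SupDistance

variable {X Y : Type*} [TopologicalSpace X] [MetricSpace Y] {f g h : Cod X Y} {K K' : Set X}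

lemma dist_le_dK (hK : IsCompact K) (hKf : K ⊆ f.dom) (hKg : K ⊆ g.dom) {x : X} (hx : x ∈ K) :
    dist (f.toFun ⟨x, hKf hx⟩) (g.toFun ⟨x, hKg hx⟩) ≤ dK f g K := by
  obtain ⟨C, hC⟩ := Metric.isBounded_iff.mp
    ((f.isCompact_image hK hKf).union (g.isCompact_image hK hKg)).isBounded
  refine le_csSup ⟨C, ?_⟩ ⟨x, hKf hx, hKg hx, hx, rfl⟩
  rintro r ⟨y, hfy, hgy, hy, rfl⟩
  exact hC (Or.inl ⟨⟨y, hfy⟩, hy, rfl⟩) (Or.inr ⟨⟨y, hgy⟩, hy, rfl⟩)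

lemma dK_nonneg (f g : Cod X Y) (K : Set X) : 0 ≤ dK f g K :=
  Real.sSup_nonneg fun _ ⟨_, _, _, _, hr⟩ => hr ▸ dist_nonneg

lemma dK_self (g : Cod X Y) (K : Set X) : dK g g K = 0 :=
  le_antisymm (Real.sSup_nonpos fun _ ⟨_, _, _, _, hr⟩ => hr ▸ (dist_self _).le)
    (dK_nonneg g g K)

lemma dK_le_add_of_subset (hK : IsCompact K) (hK' : IsCompact K') (hKK' : K ⊆ K')
    (hKf : K ⊆ f.dom) (hK'g : K' ⊆ g.dom) (hK'h : K' ⊆ h.dom) :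
    dK f h K ≤ dK f g K + dK g h K' := by
  refine Real.sSup_le ?_ (add_nonneg (dK_nonneg f g K) (dK_nonneg g h K'))
  rintro r ⟨x, -, -, hx, rfl⟩
  calc _ ≤ dist (f.toFun ⟨x, hKf hx⟩) (g.toFun ⟨x, hK'g (hKK' hx)⟩)
          + dist (g.toFun ⟨x, hK'g (hKK' hx)⟩) (h.toFun ⟨x, hK'h (hKK' hx)⟩) :=
        dist_triangle _ _ _
    _ ≤ dK f g K + dK g h K' :=
        add_le_add (dist_le_dK hK hKf (hKK'.trans hK'g) hx) (dist_le_dK hK' hK'g hK'h (hKK' hx))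

lemma mem_cball_self (hKg : K ⊆ g.dom) {ε : ℝ} (hε : 0 < ε) : g ∈ cball g K ε :=
  ⟨hKg, by rwa [dK_self]⟩

lemma cball_subset_cball (hK : IsCompact K) (hK' : IsCompact K') (hKK' : K ⊆ K')
    (hKf : K ⊆ f.dom) (hK'g : K' ⊆ g.dom) {δ ε : ℝ} (hδ : δ ≤ ε - dK f g K) :
    cball g K' δ ⊆ cball f K ε := by
  rintro h ⟨hK'h, hgh⟩
  refine ⟨hKK'.trans hK'h, ?_⟩
  linarith [dK_le_add_of_subset hK hK' hKK' hKf hK'g hK'h]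

lemma exists_cball_union_subset_inter {f₁ f₂ : Cod X Y} {K₁ K₂ : Set X} {ε₁ ε₂ : ℝ}
    (hK₁ : IsCompact K₁) (hK₂ : IsCompact K₂) (hK₁f₁ : K₁ ⊆ f₁.dom) (hK₂f₂ : K₂ ⊆ f₂.dom)
    (hg₁ : g ∈ cball f₁ K₁ ε₁) (hg₂ : g ∈ cball f₂ K₂ ε₂) :
    ∃ δ > 0, cball g (K₁ ∪ K₂) δ ⊆ cball f₁ K₁ ε₁ ∩ cball f₂ K₂ ε₂ := by
  have hKg : K₁ ∪ K₂ ⊆ g.dom := union_subset hg₁.1 hg₂.1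
  refine ⟨min (ε₁ - dK f₁ g K₁) (ε₂ - dK f₂ g K₂), lt_min (sub_pos.2 hg₁.2) (sub_pos.2 hg₂.2),
    subset_inter ?_ ?_⟩
  · exact cball_subset_cball hK₁ (hK₁.union hK₂) subset_union_left hK₁f₁ hKg (min_le_left _ _)
  · exact cball_subset_cball hK₂ (hK₁.union hK₂) subset_union_right hK₂f₂ hKg (min_le_right _ _)

end SupDistance

open TopologicalSpace in
lemma isTopologicalBasis_insert_univ {α : Type*} {s : Set (Set α)}
    (h : ∀ t₁ ∈ s, ∀ t₂ ∈ s, ∀ x ∈ t₁ ∩ t₂, ∃ t₃ ∈ s, x ∈ t₃ ∧ t₃ ⊆ t₁ ∩ t₂) :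
    @IsTopologicalBasis α (generateFrom (insert univ s)) (insert univ s) := by
  refine @IsTopologicalBasis.mk _ (generateFrom _) _ ?_
    (sUnion_eq_univ_iff.2 fun x => ⟨univ, mem_insert _ _, mem_univ x⟩) rfl
  rintro t₁ (rfl | ht₁) t₂ (rfl | ht₂) x hx
  · exact ⟨univ, mem_insert _ _, hx.1, (inter_self _).superset⟩
  · exact ⟨t₂, mem_insert_of_mem _ ht₂, hx.2, (univ_inter _).superset⟩
  · exact ⟨t₁, mem_insert_of_mem _ ht₁, hx.1, (inter_univ _).superset⟩
  · obtain ⟨t₃, ht₃, hxt₃, hsub⟩ := h t₁ ht₁ t₂ ht₂ x hx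
    exact ⟨t₃, mem_insert_of_mem _ ht₃, hxt₃, hsub⟩

/-- The family consisting of the whole space together with the sets `B_K(f,ε)` is a basis
for a topology on `C_od(X,Y)`. -/
theorem stmt6 (X Y : Type*) [TopologicalSpace X] [MetricSpace Y] :
    @TopologicalSpace.IsTopologicalBasis (Cod X Y)
      (TopologicalSpace.generateFrom
        (insert Set.univ
          {S | ∃ (f : Cod X Y) (K : Set X) (ε : ℝ), K.Nonempty ∧ IsCompact K ∧ K ⊆ f.dom ∧
            0 < ε ∧ S = cball f K ε}))
      (insert Set.univ
        {S | ∃ (f : Cod X Y) (K : Set X) (ε : ℝ), K.Nonempty ∧ IsCompact K ∧ K ⊆ f.dom ∧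
          0 < ε ∧ S = cball f K ε}) := by
  refine isTopologicalBasis_insert_univ ?_
  rintro _ ⟨f₁, K₁, ε₁, hne₁, hK₁, hK₁f₁, -, rfl⟩ _ ⟨f₂, K₂, ε₂, -, hK₂, hK₂f₂, -, rfl⟩ g ⟨hg₁, hg₂⟩
  obtain ⟨δ, hδ, hsub⟩ := exists_cball_union_subset_inter hK₁ hK₂ hK₁f₁ hK₂f₂ hg₁ hg₂
  have hKg : K₁ ∪ K₂ ⊆ g.dom := union_subset hg₁.1 hg₂.1
  exact ⟨cball g (K₁ ∪ K₂) δ,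
    ⟨g, K₁ ∪ K₂, δ, hne₁.mono subset_union_left, hK₁.union hK₂, hKg, hδ, rfl⟩,
    mem_cball_self hKg hδ, hsub⟩
end

section
/- Let X be a locally compact Hausdorff space and Y a metric space. If a net (f_λ) of continuous partial functions from X to Y with open domains converges in the topology of compact convergence to a partial function f with open domain, then f is continuous. -/
open Set Topology Filter

/-- Continuity is local and `X` is locally compact, so it suffices to see `f` as a uniform limit
of continuous functions on a compact neighbourhood of each point. -/
theorem continuousOn_of_forall_isCompact_tendstoUniformlyOn {X Y ι : Type*}
    [TopologicalSpace X] [LocallyCompactSpace X] [UniformSpace Y] {l : Filter ι} [l.NeBot]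
    {F : ι → X → Y} {f : X → Y} {Ω : Set X} (hΩ : IsOpen Ω)
    (h : ∀ K : Set X, K.Nonempty → IsCompact K → K ⊆ Ω →
      (∀ᶠ i in l, ContinuousOn (F i) K) ∧ TendstoUniformlyOn F f l K) :
    ContinuousOn f Ω := by
  intro x hx
  obtain ⟨K, hKc, hxK, hKΩ⟩ := exists_compact_subset hΩ hx
  obtain ⟨hcont, hunif⟩ := h K ⟨x, interior_subset hxK⟩ hKc hKΩ
  have hfK : ContinuousOn f K := hunif.continuousOn hcont.frequently
  exact (hfK.continuousAt (mem_interior_iff_mem_nhds.mp hxK)).continuousWithinAt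

theorem stmt8_general {X Y : Type*} [TopologicalSpace X] [LocallyCompactSpace X]
    [MetricSpace Y] {ι : Type*} (l : Filter ι) [l.NeBot]
    (U : ι → Set X) (F : ι → X → Y)
    (hF : ∀ i, ContinuousOn (F i) (U i))
    (Ω : Set X) (f : X → Y) (hΩ : IsOpen Ω)
    (hconv : ∀ K : Set X, K.Nonempty → IsCompact K → K ⊆ Ω → ∀ ε > (0 : ℝ),
      ∀ᶠ i in l, K ⊆ U i ∧ ∀ x ∈ K, dist (F i x) (f x) < ε) :
    ContinuousOn f Ω := by
  refine continuousOn_of_forall_isCompact_tendstoUniformlyOn (l := l) (F := F) hΩ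
    fun K hK hKc hKΩ => ⟨?_, ?_⟩
  · filter_upwards [hconv K hK hKc hKΩ 1 one_pos] with i hi
    exact (hF i).mono hi.1
  · rw [Metric.tendstoUniformlyOn_iff]
    intro ε hε
    filter_upwards [hconv K hK hKc hKΩ ε hε] with i hi y hy
    rw [dist_comm]
    exact hi.2 y hy

/-- Let `X` be locally compact Hausdorff and `Y` a metric space. If a net of continuous
partial functions with open domains (represented by open sets `U i` together with functions
`F i` continuous on `U i`) converges in the topology of compact convergence to a partial
function `f` with open domain `Ω`, then `f` is continuous on `Ω`. -/
theorem stmt8 {X Y : Type*} [TopologicalSpace X] [LocallyCompactSpace X] [T2Space X]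
    [MetricSpace Y] {ι : Type*} (l : Filter ι) [l.NeBot]
    (U : ι → Set X) (F : ι → X → Y)
    (hU : ∀ i, IsOpen (U i)) (hF : ∀ i, ContinuousOn (F i) (U i))
    (Ω : Set X) (f : X → Y) (hΩ : IsOpen Ω)
    (hconv : ∀ K : Set X, K.Nonempty → IsCompact K → K ⊆ Ω → ∀ ε > (0 : ℝ),
      ∀ᶠ i in l, K ⊆ U i ∧ ∀ x ∈ K, dist (F i x) (f x) < ε) :
    ContinuousOn f Ω :=
  stmt8_general l U F hF Ω f hΩ hconv
end
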